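/- There exist constants 0 < γ < 1 and c > 0 such that for all sufficiently large n there is a function nmExt : {0,1}^n × {0,1}^n → {0,1}^m with m ≥ c·n that is a seedless non-malleable extractor for two independent sources with min-entropy (1−γ)n and error 2^{−c·n/log n}: for all independent (n,(1−γ)n)-sources X, Y and all tampering functions f, g : {0,1}^n → {0,1}^n such that at least one of f, g has no fixed points, (nmExt(X,Y), nmExt(f(X),g(Y))) ≈_{2^{−c·n/log n}} (U_m, nmExt(f(X),g(Y))). -/

import Mathlib

open Finset Real

/-- Bit strings of length `n`. -/
abbrev BS (n : ℕ) := Fin n → Bool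

noncomputable section

/-- `p` is a probability distribution on the finite type `α`. -/
def IsDist {α : Type*} [Fintype α] (p : α → ℝ) : Prop :=
  (∀ x, 0 ≤ p x) ∧ ∑ x, p x = 1

/-- Statistical distance between two distributions on a finite type. -/
def statDist {α : Type*} [Fintype α] (p q : α → ℝ) : ℝ :=
  (∑ x, |p x - q x|) / 2

/-- Pushforward of a distribution along a function. -/
def distMap {α β : Type*} [Fintype α] [DecidableEq β] (f : α → β) (p : α → ℝ) : β → ℝ :=
  fun y => ∑ x ∈ Finset.univ.filter (fun x => f x = y), p x

/-- Product (independent joint) distribution. -/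
def distProd {α β : Type*} (p : α → ℝ) (q : β → ℝ) : α × β → ℝ :=
  fun z => p z.1 * q z.2

/-- Product of finitely many distributions (mutually independent joint distribution). -/
def distPi {ι : Type*} {α : ι → Type*} [Fintype ι] (p : ∀ i, α i → ℝ) : (∀ i, α i) → ℝ :=
  fun x => ∏ i, p i (x i)

/-- The uniform distribution on a finite type. -/
def unifDist (α : Type*) [Fintype α] : α → ℝ :=
  fun _ => (Fintype.card α : ℝ)⁻¹

/-- `p` has min-entropy at least `k`, i.e. every point has probability at most `2 ^ (-k)`. -/
def MinEntropyGE {α : Type*} (p : α → ℝ) (k : ℝ) : Prop :=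
  ∀ x, p x ≤ (2:ℝ) ^ (-k)

/-- `nmExt` is a seedless non-malleable extractor for two independent sources with
min-entropy `k` and error `ε`. -/
def IsNM2Ext {n m : ℕ} (nmExt : BS n → BS n → BS m) (k ε : ℝ) : Prop :=
  ∀ pX pY : BS n → ℝ, IsDist pX → IsDist pY →
    MinEntropyGE pX k → MinEntropyGE pY k →
      ∀ f g : BS n → BS n, ((∀ x, f x ≠ x) ∨ (∀ y, g y ≠ y)) →
        statDist
          (distMap (fun z : BS n × BS n => (nmExt z.1 z.2, nmExt (f z.1) (g z.2)))
            (distProd pX pY))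
          (distProd (unifDist (BS m))
            (distMap (fun z : BS n × BS n => nmExt (f z.1) (g z.2)) (distProd pX pY)))
        ≤ ε

/-!
A uniformly random `ω : {0,1}ⁿ × {0,1}ⁿ → {0,1}ᵐ` works. A source of min-entropy `log K` is a
convex combination of flat sources on `K` points, and the statistical distance is the largest
advantage of a test `T ⊆ {0,1}ᵐ × {0,1}ᵐ`. So it suffices that for all tamperings `f, g`, all
`K`-sets `A, B` and all tests `T`, the centred indicators of `T` at `(ω z, ω (f z.1, g z.2))` sum
to at most `δ K²` over `A × B`. A fixed-point-free map has a proper 3-colouring of its functional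
graph, and on each colour class `C` the values `ω z`, `z ∈ C`, are independent of the values
`ω (f z.1, g z.2)`. A Chernoff bound then makes each failure have probability `exp (-(δK)² / 36)`,
doubly exponentially small in `n`, which beats the union bound over the `2 ^ O(n 2ⁿ)` choices of
`(f, g, A, B, T)`.
-/

open Function

section Distributions

variable {α β : Type*} [Fintype α]

theorem sum_distMap_mul [Fintype β] [DecidableEq β] (f : α → β) (p : α → ℝ) (r : β → ℝ) :
    ∑ y, distMap f p y * r y = ∑ x, p x * r (f x) := by
  simp only [distMap, sum_mul]
  rw [← sum_fiberwise univ f fun x => p x * r (f x)]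
  exact sum_congr rfl fun y _ => sum_congr rfl fun x hx => by rw [(mem_filter.1 hx).2]

theorem sum_distMap [Fintype β] [DecidableEq β] (f : α → β) (p : α → ℝ) :
    ∑ y, distMap f p y = ∑ x, p x := by
  simpa using sum_distMap_mul f p 1

theorem sum_distProd [Fintype β] (p : α → ℝ) (q : β → ℝ) :
    ∑ z, distProd p q z = (∑ x, p x) * ∑ y, q y := by
  rw [Fintype.sum_prod_type, Fintype.sum_mul_sum]
  rfl

theorem sum_unifDist [Nonempty α] : ∑ x, unifDist α x = 1 := by
  simp [unifDist]

theorem statDist_le_of_forall_sum_sub_le {p q : α → ℝ} {ε : ℝ} (hpq : ∑ x, p x = ∑ x, q x)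
    (hT : ∀ T : Finset α, ∑ x ∈ T, (p x - q x) ≤ ε) : statDist p q ≤ ε := by
  classical
  have habs : ∀ x, |p x - q x| = 2 * (if q x < p x then p x - q x else 0) - (p x - q x) := by
    intro x
    split_ifs with h
    · rw [abs_of_pos (sub_pos.2 h)]; ring
    · rw [abs_of_nonpos (sub_nonpos.2 (not_lt.1 h))]; ring
  have hpos := hT {x | q x < p x}
  simp only [statDist, habs, sum_sub_distrib, ← mul_sum, ← sum_filter, hpq] at hpos ⊢
  linarith

theorem exists_card_eq_forall_notMem_le [DecidableEq α] (a : α → ℝ) {K : ℕ}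
    (hK : K ≤ Fintype.card α) : ∃ A : Finset α, #A = K ∧ ∀ x ∈ A, ∀ y ∉ A, a y ≤ a x := by
  obtain ⟨A, hA, hmax⟩ := (univ.powersetCard K).exists_max_image (fun A => ∑ x ∈ A, a x)
    (powersetCard_nonempty.2 (by simpa using hK))
  refine ⟨A, (mem_powersetCard.1 hA).2, fun x hx y hy => ?_⟩
  have hy' : y ∉ A.erase x := fun h => hy (mem_of_mem_erase h)
  have hswap := hmax (insert y (A.erase x)) <| mem_powersetCard.2 ⟨subset_univ _, by
    rw [card_insert_of_notMem hy', card_erase_of_mem hx, (mem_powersetCard.1 hA).2]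
    have := (mem_powersetCard.1 hA).2 ▸ card_pos.2 ⟨x, hx⟩
    omega⟩
  rw [sum_insert hy', sum_erase_eq_sub hx] at hswap
  linarith

/-- The reduction from sources of min-entropy `log K` to flat sources on `K` points. -/
theorem sum_mul_le_of_forall_card_eq [DecidableEq α] {p a : α → ℝ} {K : ℕ} {G : ℝ}
    (hp0 : ∀ x, 0 ≤ p x) (hp1 : ∑ x, p x = 1) (hpK : ∀ x, p x ≤ 1 / K)
    (hG : ∀ A : Finset α, #A = K → ∑ x ∈ A, a x ≤ G) : ∑ x, p x * a x ≤ G / K := by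
  have hmass : (1 : ℝ) ≤ Fintype.card α * (1 / K) := by
    simpa [← hp1] using sum_le_sum fun x (_ : x ∈ univ) => hpK x
  have hKpos : (0 : ℝ) < K := by
    rcases Nat.eq_zero_or_pos K with h | h
    · norm_num [h] at hmass
    · exact_mod_cast h
  have hKcard : K ≤ Fintype.card α := by
    rw [mul_one_div, le_div_iff₀ hKpos, one_mul] at hmass
    exact_mod_cast hmass
  obtain ⟨A, hA, htop⟩ := exists_card_eq_forall_notMem_le a hKcard
  obtain ⟨x₀, hx₀, hmin⟩ := A.exists_min_image a (card_pos.1 (by rw [hA]; exact_mod_cast hKpos))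
  calc ∑ x, p x * a x = ∑ x, p x * (a x - a x₀) + a x₀ := by
        simp [mul_sub, sum_sub_distrib, ← sum_mul, hp1]
    _ ≤ ∑ x, (if x ∈ A then 1 / K * (a x - a x₀) else 0) + a x₀ := by
        gcongr with x
        split_ifs with hx
        · exact mul_le_mul_of_nonneg_right (hpK x) (sub_nonneg.2 (hmin x hx))
        · exact mul_nonpos_of_nonneg_of_nonpos (hp0 x) (sub_nonpos.2 (htop x₀ hx₀ x hx))
    _ = (∑ x ∈ A, a x) / K := by
        rw [Fintype.sum_ite_mem, ← mul_sum, sum_sub_distrib, sum_const, hA, nsmul_eq_mul]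
        field_simp
        ring
    _ ≤ G / K := by gcongr; exact hG A hA

end Distributions

theorem Function.exists_fin_three_coloring {α : Type*} [Fintype α] [DecidableEq α] {f : α → α}
    (hf : ∀ x, f x ≠ x) : ∃ c : α → Fin 3, ∀ x, c (f x) ≠ c x := by
  suffices ∀ s : Finset α, ∃ c : α → Fin 3, ∀ x ∈ s, f x ∈ s → c (f x) ≠ c x by
    obtain ⟨c, hc⟩ := this univ
    exact ⟨c, fun x => hc x (mem_univ x) (mem_univ _)⟩
  intro s
  induction s using Finset.strongInduction with
  | H s ih =>
    obtain rfl | hs := s.eq_empty_or_nonempty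
    · exact ⟨0, by simp⟩
    -- some `z ∈ s` has at most one preimage in `s`, so it has at most two neighbours to avoid
    obtain ⟨z, hz, hfib⟩ :=
      exists_card_fiber_le_of_card_le_mul (f := f) hs (le_of_eq (mul_one _).symm)
    obtain ⟨c, hc⟩ := ih _ (erase_ssubset hz)
    obtain ⟨ν, -, hν⟩ := exists_mem_notMem_of_card_lt_card
      (s := insert (c (f z)) ({w ∈ s | f w = z}.image c)) (t := univ) <| by
        calc _ ≤ #({w ∈ s | f w = z}.image c) + 1 := card_insert_le _ _
          _ ≤ 1 + 1 := by gcongr; exact card_image_le.trans hfib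
          _ < #(univ : Finset (Fin 3)) := by simp
    rw [mem_insert, mem_image, not_or] at hν
    refine ⟨update c z ν, fun x hx hfx => ?_⟩
    by_cases hxz : x = z
    · subst hxz
      rw [update_of_ne (hf x), update_self]
      exact fun h => hν.1 h.symm
    by_cases hfxz : f x = z
    · rw [hfxz, update_self, update_of_ne hxz]
      exact fun h => hν.2 ⟨x, mem_filter.2 ⟨hx, hfxz⟩, h.symm⟩
    rw [update_of_ne hfxz, update_of_ne hxz]
    exact hc x (mem_erase.2 ⟨hxz, hx⟩) (mem_erase.2 ⟨hfxz, hfx⟩)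

section CenteredIndicator

variable {β : Type*} [Fintype β] [DecidableEq β]

def centeredIndicator (T : Finset (β × β)) (u v : β) : ℝ :=
  (if (u, v) ∈ T then 1 else 0) - (#{u' | (u', v) ∈ T} : ℝ) / Fintype.card β

theorem abs_centeredIndicator_le (T : Finset (β × β)) (u v : β) :
    |centeredIndicator T u v| ≤ 1 := by
  have hfrac : (#{u' | (u', v) ∈ T} : ℝ) / Fintype.card β ≤ 1 := by
    rw [div_le_one (by exact_mod_cast Fintype.card_pos_iff.2 ⟨u⟩)]
    exact_mod_cast card_filter_le _ _
  have : 0 ≤ (#{u' | (u', v) ∈ T} : ℝ) / Fintype.card β := by positivity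
  rw [centeredIndicator, abs_le]
  constructor <;> split_ifs <;> linarith

theorem sum_centeredIndicator [Nonempty β] (T : Finset (β × β)) (v : β) :
    ∑ u, centeredIndicator T u v = 0 := by
  simp [centeredIndicator, sum_sub_distrib, sum_boole, mul_div_cancel₀, Fintype.card_ne_zero]

theorem sum_sub_eq_sum_mul_centeredIndicator {γ : Type*} [Fintype γ] (E E' : γ → β)
    (p : γ → ℝ) (T : Finset (β × β)) :
    ∑ t ∈ T, (distMap (fun z => (E z, E' z)) p t - distProd (unifDist β) (distMap E' p) t)
      = ∑ z, p z * centeredIndicator T (E z) (E' z) := by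
  have hjoint : ∑ t ∈ T, distMap (fun z => (E z, E' z)) p t
      = ∑ z, p z * (if (E z, E' z) ∈ T then 1 else 0) := by
    rw [← sum_distMap_mul _ _ fun t => if t ∈ T then 1 else 0]
    simp
  have hprod : ∑ t ∈ T, distProd (unifDist β) (distMap E' p) t
      = ∑ z, p z * ((#{u | (u, E' z) ∈ T} : ℝ) / Fintype.card β) := by
    rw [← sum_distMap_mul _ _ fun v => (#{u | (u, v) ∈ T} : ℝ) / Fintype.card β,
      ← Fintype.sum_ite_mem, Fintype.sum_prod_type, sum_comm]
    refine sum_congr rfl fun v _ => ?_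
    rw [← sum_filter]
    simp only [distProd, unifDist, sum_const, nsmul_eq_mul]
    ring
  rw [sum_sub_distrib, hjoint, hprod, ← sum_sub_distrib]
  simp only [centeredIndicator, mul_sub]

end CenteredIndicator

section RandomFunctions

variable {P V : Type*} [Fintype P] [DecidableEq P] [Fintype V]

theorem sum_sum_update (H : (P → V) → ℝ) (a : P) :
    ∑ ω, ∑ v, H (update ω a v) = Fintype.card V * ∑ ω, H ω := by
  let e : Equiv.Perm ((P → V) × V) := Involutive.toPerm (fun x => (update x.1 a x.2, x.1 a))
    fun x => by simp
  calc ∑ ω, ∑ v, H (update ω a v) = ∑ x : (P → V) × V, H (update x.1 a x.2) :=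
        (Fintype.sum_prod_type' _).symm
    _ = ∑ x : (P → V) × V, H x.1 := Fintype.sum_equiv e _ _ fun _ => rfl
    _ = Fintype.card V * ∑ ω, H ω := by simp [Fintype.sum_prod_type, mul_sum]

theorem sum_prod_le_card_mul_pow [Nonempty V] {φ : P → P} {F : V → V → ℝ} {B : ℝ}
    (hF0 : ∀ u v, 0 ≤ F u v) (hFB : ∀ v, ∑ u, F u v ≤ Fintype.card V * B) (W : Finset P)
    (hW : ∀ w ∈ W, φ w ∉ W) :
    ∑ ω : P → V, ∏ w ∈ W, F (ω w) (ω (φ w)) ≤ Fintype.card (P → V) * B ^ #W := by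
  have hV : (0 : ℝ) < Fintype.card V := by exact_mod_cast Fintype.card_pos
  have hB : 0 ≤ B := nonneg_of_mul_nonneg_right
    ((sum_nonneg fun u _ => hF0 u (Classical.arbitrary V)).trans (hFB _)) hV
  induction W using Finset.induction_on with
  | empty => simp
  | insert a W ha ih =>
    have hφa : φ a ≠ a := fun h =>
      hW a (mem_insert_self a W) (by rw [h]; exact mem_insert_self a W)
    have hrest : ∀ w ∈ W, w ≠ a ∧ φ w ≠ a ∧ φ w ∉ W := fun w hw =>
      have h := hW w (mem_insert_of_mem hw)
      ⟨ne_of_mem_of_not_mem hw ha, fun h' => h (by rw [h']; exact mem_insert_self a W),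
        fun h' => h (mem_insert_of_mem h')⟩
    have hG : ∀ ω v, ∏ w ∈ W, F (update ω a v w) (update ω a v (φ w))
        = ∏ w ∈ W, F (ω w) (ω (φ w)) := fun ω v => prod_congr rfl fun w hw => by
      rw [update_of_ne (hrest w hw).1, update_of_ne (hrest w hw).2.1]
    refine le_of_mul_le_mul_left ?_ hV
    calc Fintype.card V * ∑ ω : P → V, ∏ w ∈ insert a W, F (ω w) (ω (φ w))
        = ∑ ω : P → V, (∏ w ∈ W, F (ω w) (ω (φ w))) * ∑ v, F v (ω (φ a)) := by
          rw [← sum_sum_update _ a]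
          refine sum_congr rfl fun ω _ => ?_
          simp only [prod_insert ha, update_self, update_of_ne hφa, hG, mul_sum]
          exact sum_congr rfl fun v _ => mul_comm _ _
      _ ≤ ∑ ω : P → V, (∏ w ∈ W, F (ω w) (ω (φ w))) * (Fintype.card V * B) := by
          gcongr with ω
          · exact prod_nonneg fun w _ => hF0 _ _
          · exact hFB _
      _ ≤ Fintype.card V * B * (Fintype.card (P → V) * B ^ #W) := by
          rw [← sum_mul, mul_comm]
          gcongr
          exact ih fun w hw => (hrest w hw).2.2
      _ = Fintype.card V * (Fintype.card (P → V) * B ^ #(insert a W)) := by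
          rw [card_insert_of_notMem ha, pow_succ]
          ring

theorem sum_exp_mul_le {h : V → ℝ} {t : ℝ} (h1 : ∀ u, |h u| ≤ 1) (h0 : ∑ u, h u = 0)
    (ht : |t| ≤ 1) : ∑ u, exp (t * h u) ≤ Fintype.card V * exp (t ^ 2) := by
  calc ∑ u, exp (t * h u) ≤ ∑ u, (1 + t * h u + t ^ 2) := by
        gcongr with u
        have hsq : (t * h u) ^ 2 ≤ t ^ 2 := by
          rw [mul_pow, ← sq_abs (h u)]
          exact mul_le_of_le_one_right (sq_nonneg t) (pow_le_one₀ (abs_nonneg _) (h1 u))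
        have hx : |t * h u| ≤ 1 := by
          rw [abs_mul]
          nlinarith [abs_nonneg t, abs_nonneg (h u), h1 u]
        linarith [(abs_le.1 (abs_exp_sub_one_sub_id_le hx)).2]
    _ = Fintype.card V * (1 + t ^ 2) := by
        rw [sum_add_distrib, sum_add_distrib, ← mul_sum, h0]
        simp
        ring
    _ ≤ Fintype.card V * exp (t ^ 2) := by
        gcongr
        linarith [add_one_le_exp (t ^ 2)]

/-- A Chernoff bound for a uniformly random `ω : P → V`: since `φ` maps `W` outside `W`, the
terms of the sum are independent given the values of `ω` off `W`. -/
theorem card_upper_tail_le [Nonempty V] {φ : P → P} {W : Finset P} (hW : ∀ w ∈ W, φ w ∉ W)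
    {h : V → V → ℝ} (h1 : ∀ u v, |h u v| ≤ 1) (h0 : ∀ v, ∑ u, h u v = 0)
    {t : ℝ} (ht0 : 0 ≤ t) (ht1 : t ≤ 1) (s : ℝ) :
    (#{ω : P → V | s ≤ ∑ w ∈ W, h (ω w) (ω (φ w))} : ℝ)
      ≤ Fintype.card (P → V) * exp (t ^ 2 * #W - t * s) := by
  have hmgf := sum_prod_le_card_mul_pow (F := fun u v => exp (t * h u v))
    (fun _ _ => (exp_pos _).le)
    (fun v => sum_exp_mul_le (fun u => h1 u v) (h0 v) (abs_le.2 ⟨by linarith, ht1⟩)) W hW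
  calc (#{ω : P → V | s ≤ ∑ w ∈ W, h (ω w) (ω (φ w))} : ℝ)
      ≤ ∑ ω : P → V, exp (t * (∑ w ∈ W, h (ω w) (ω (φ w)) - s)) := by
        rw [natCast_card_filter]
        gcongr with ω
        split_ifs with hω
        · exact one_le_exp (mul_nonneg ht0 (sub_nonneg.2 hω))
        · exact (exp_pos _).le
    _ = exp (-(t * s)) * ∑ ω : P → V, ∏ w ∈ W, exp (t * h (ω w) (ω (φ w))) := by
        simp only [mul_sum, ← exp_sum, ← exp_add, mul_sub]
        ring_nf
    _ ≤ exp (-(t * s)) * (Fintype.card (P → V) * exp (t ^ 2) ^ #W) := by gcongr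
    _ = Fintype.card (P → V) * exp (t ^ 2 * #W - t * s) := by
        rw [← exp_nat_mul, mul_comm (#W : ℝ), sub_eq_add_neg, exp_add]
        ring

end RandomFunctions

theorem exists_forall_notMem_of_card_le {ι Ω : Type*} [Fintype ι] [Fintype Ω] [Nonempty Ω]
    (bad : ι → Finset Ω) {r : ℝ} (hbad : ∀ i, (#(bad i) : ℝ) ≤ Fintype.card Ω * r)
    (hr : Fintype.card ι * r < 1) : ∃ ω, ∀ i, ω ∉ bad i := by
  classical
  by_contra! h
  have hcover : (univ : Finset Ω) ⊆ univ.biUnion bad := fun ω _ => by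
    obtain ⟨i, hi⟩ := h ω
    exact mem_biUnion.2 ⟨i, mem_univ _, hi⟩
  have hΩ : (0 : ℝ) < Fintype.card Ω := by exact_mod_cast Fintype.card_pos
  have : (Fintype.card Ω : ℝ) ≤ Fintype.card ι * (Fintype.card Ω * r) :=
    calc (Fintype.card Ω : ℝ) ≤ ∑ i, (#(bad i) : ℝ) := by
          exact_mod_cast (card_le_card hcover).trans card_biUnion_le
      _ ≤ ∑ _i : ι, Fintype.card Ω * r := sum_le_sum fun i _ => hbad i
      _ = Fintype.card ι * (Fintype.card Ω * r) := by simp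
  nlinarith

/-- Non-malleability against flat sources of size `K`: for `X`, `Y` uniform on `A`, `B`, the sum
is `K ^ 2` times the advantage of the test `T` (see `sum_sub_eq_sum_mul_centeredIndicator`). -/
def IsFlatNM2Ext {α β : Type*} [Fintype β] [DecidableEq β] (nmExt : α → α → β) (K : ℕ) (δ : ℝ) :
    Prop :=
  ∀ f g : α → α, ((∀ x, f x ≠ x) ∨ (∀ y, g y ≠ y)) → ∀ A B : Finset α, #A = K → #B = K →
    ∀ T : Finset (β × β),
      ∑ z ∈ A ×ˢ B, centeredIndicator T (nmExt z.1 z.2) (nmExt (f z.1) (g z.2)) ≤ δ * K ^ 2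

theorem exists_isFlatNM2Ext {α β : Type*} [Fintype α] [DecidableEq α] [Fintype β] [DecidableEq β]
    [Nonempty β] (K : ℕ) {δ : ℝ} (hδ0 : 0 ≤ δ) (hδ6 : δ ≤ 6)
    (hcard : (Fintype.card ((α → α) × (α → α) × Finset α × Finset α × Finset (β × β) × Fin 3) : ℝ)
      * exp (-((δ * K) ^ 2 / 36)) < 1) :
    ∃ nmExt : α → α → β, IsFlatNM2Ext nmExt K δ := by
  have hcol : ∀ f g : α → α, ∃ C : α × α → Fin 3,
      ((∀ x, f x ≠ x) ∨ (∀ y, g y ≠ y)) → ∀ z, C (f z.1, g z.2) ≠ C z := by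
    intro f g
    by_cases hf : ∀ x, f x ≠ x
    · obtain ⟨c, hc⟩ := exists_fin_three_coloring hf
      exact ⟨fun z => c z.1, fun _ z => hc z.1⟩
    by_cases hg : ∀ y, g y ≠ y
    · obtain ⟨c, hc⟩ := exists_fin_three_coloring hg
      exact ⟨fun z => c z.2, fun _ z => hc z.2⟩
    exact ⟨0, fun h => (h.elim hf hg).elim⟩
  choose C hC using hcol
  let bad : (α → α) × (α → α) × Finset α × Finset α × Finset (β × β) × Fin 3 →
      Finset (α × α → β) := fun ⟨f, g, A, B, T, i⟩ =>
    if ((∀ x, f x ≠ x) ∨ (∀ y, g y ≠ y)) ∧ #A = K ∧ #B = K then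
      univ.filter fun ω : α × α → β => δ * K ^ 2 / 3 ≤ ∑ z ∈ A ×ˢ B with C f g z = i,
        centeredIndicator T (ω z) (ω (f z.1, g z.2))
    else ∅
  have hbad : ∀ idx,
      (#(bad idx) : ℝ) ≤ Fintype.card (α × α → β) * exp (-((δ * K) ^ 2 / 36)) := by
    rintro ⟨f, g, A, B, T, i⟩
    dsimp only [bad]
    split_ifs with hcond
    swap
    · simp only [card_empty, Nat.cast_zero]
      positivity
    obtain ⟨hfg, hA, hB⟩ := hcond
    set W := {z ∈ A ×ˢ B | C f g z = i}
    have hW : ∀ w ∈ W, (f w.1, g w.2) ∉ W :=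
      fun w hw hφw => hC f g hfg w ((mem_filter.1 hφw).2.trans (mem_filter.1 hw).2.symm)
    have hWcard : (#W : ℝ) ≤ K ^ 2 :=
      calc (#W : ℝ) ≤ #(A ×ˢ B) := by exact_mod_cast card_filter_le _ _
        _ = K ^ 2 := by rw [card_product, hA, hB]; push_cast; ring
    calc _ ≤ Fintype.card (α × α → β) * exp ((δ / 6) ^ 2 * #W - δ / 6 * (δ * K ^ 2 / 3)) :=
        card_upper_tail_le hW (abs_centeredIndicator_le T) (sum_centeredIndicator T)
          (by positivity) (by linarith) _
      -- `t = δ / 6` minimises `t ^ 2 * K ^ 2 - t * (δ * K ^ 2 / 3)`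
      _ ≤ Fintype.card (α × α → β) * exp (-((δ * K) ^ 2 / 36)) := by
        gcongr
        nlinarith [sq_nonneg δ]
  obtain ⟨ω, hω⟩ := exists_forall_notMem_of_card_le bad hbad hcard
  refine ⟨curry ω, fun f g hfg A B hA hB T => ?_⟩
  by_contra! hlarge
  simp only [curry_apply, Prod.mk.eta] at hlarge
  -- one of the three colour classes carries a third of the sum
  obtain ⟨i, -, hi⟩ := exists_le_of_sum_le (s := univ) (f := fun _ : Fin 3 => δ * K ^ 2 / 3)
    (g := fun i => ∑ z ∈ A ×ˢ B with C f g z = i, centeredIndicator T (ω z) (ω (f z.1, g z.2)))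
    univ_nonempty <| by
      simp only [sum_fiberwise, sum_const, card_univ, Fintype.card_fin, nsmul_eq_mul]
      linarith
  refine hω (f, g, A, B, T, i) ?_
  dsimp only [bad]
  rw [if_pos ⟨hfg, hA, hB⟩]
  exact mem_filter.2 ⟨mem_univ _, hi⟩

theorem IsFlatNM2Ext.isNM2Ext {n m K : ℕ} {nmExt : BS n → BS n → BS m} {k δ : ℝ}
    (h : IsFlatNM2Ext nmExt K δ) (hk : (2 : ℝ) ^ (-k) ≤ 1 / K) : IsNM2Ext nmExt k δ := by
  intro pX pY hX hY hXk hYk f g hfg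
  have hK : (K : ℝ) ≠ 0 := fun hK0 => by
    rw [hK0, div_zero] at hk
    exact (rpow_pos_of_pos two_pos (-k)).not_ge hk
  refine statDist_le_of_forall_sum_sub_le ?_ fun T => ?_
  · simp only [sum_distMap, sum_distProd, sum_unifDist, hX.2, hY.2, mul_one]
  rw [sum_sub_eq_sum_mul_centeredIndicator, Fintype.sum_prod_type]
  simp only [distProd, mul_assoc, ← mul_sum]
  have hrow : ∀ A : Finset (BS n), #A = K → ∑ x ∈ A, ∑ y, pY y *
      centeredIndicator T (nmExt x y) (nmExt (f x) (g y)) ≤ δ * K := fun A hA => by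
    rw [sum_comm]
    simp only [← mul_sum]
    calc _ ≤ δ * K ^ 2 / K :=
          sum_mul_le_of_forall_card_eq hY.1 hY.2 (fun y => (hYk y).trans hk) fun B hB => by
            simpa only [sum_product_right] using h f g hfg A B hA hB T
      _ = δ * K := by field_simp
  calc _ ≤ δ * K / K := sum_mul_le_of_forall_card_eq hX.1 hX.2 (fun x => (hXk x).trans hk) hrow
    _ = δ := by field_simp

theorem IsNM2Ext.mono {n m : ℕ} {nmExt : BS n → BS n → BS m} {k δ ε : ℝ}
    (h : IsNM2Ext nmExt k δ) (hδε : δ ≤ ε) : IsNM2Ext nmExt k ε :=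
  fun pX pY hX hY hXk hYk f g hfg => (h pX pY hX hY hXk hYk f g hfg).trans hδε

theorem card_index_le {n m : ℕ} (hm : 2 * m ≤ n) :
    Fintype.card ((BS n → BS n) × (BS n → BS n) × Finset (BS n) × Finset (BS n)
      × Finset (BS m × BS m) × Fin 3) ≤ 2 ^ ((2 * n + 3) * 2 ^ n + 2) := by
  simp only [Fintype.card_prod, Fintype.card_fun, Fintype.card_finset, Fintype.card_fin,
    Fintype.card_bool]
  calc (2 ^ n) ^ 2 ^ n * ((2 ^ n) ^ 2 ^ n * (2 ^ 2 ^ n * (2 ^ 2 ^ n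
        * (2 ^ (2 ^ m * 2 ^ m) * 3))))
      ≤ 2 ^ (n * 2 ^ n) * (2 ^ (n * 2 ^ n) * (2 ^ 2 ^ n * (2 ^ 2 ^ n
        * (2 ^ 2 ^ n * 2 ^ 2)))) := by
        rw [← pow_mul, ← pow_add]
        gcongr
        · exact one_le_two
        · exact one_le_two
        · omega
        · norm_num
    _ = 2 ^ ((2 * n + 3) * 2 ^ n + 2) := by
        simp only [← pow_add]
        ring_nf

theorem mul_lt_sixteen_pow {q : ℕ} (hq : 6 ≤ q) : 36 * 128 * (16 * q + 18) < 16 ^ q := by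
  induction q, hq using Nat.le_induction with
  | base => norm_num
  | succ q hq ih => rw [pow_succ]; omega

theorem card_index_mul_exp_lt {n : ℕ} (hn : 48 ≤ n) :
    (Fintype.card ((BS n → BS n) × (BS n → BS n) × Finset (BS n) × Finset (BS n)
      × Finset (BS (n / 2) × BS (n / 2)) × Fin 3) : ℝ)
      * exp (-(((2 ^ (n / 8) : ℝ)⁻¹ * ((2 ^ (7 * (n / 8)) : ℕ) : ℝ)) ^ 2 / 36)) < 1 := by
  set q := n / 8
  set b := (2 * n + 3) * 2 ^ n + 2 with hbdef
  have hb : 36 * b < 2 ^ (12 * q) := by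
    have h2n : 2 ^ n ≤ 128 * 256 ^ q :=
      calc 2 ^ n ≤ 2 ^ (8 * q + 7) := Nat.pow_le_pow_right two_pos (by omega)
        _ = 128 * 256 ^ q := by rw [pow_add, pow_mul]; norm_num; ring
    calc 36 * b ≤ 36 * 128 * (16 * q + 18) * 256 ^ q := by
          have h1 := Nat.one_le_pow q 256 (by norm_num)
          have h2 := Nat.mul_le_mul (by omega : 2 * n + 3 ≤ 16 * q + 17) h2n
          rw [hbdef]
          nlinarith
      _ < 16 ^ q * 256 ^ q := Nat.mul_lt_mul_of_pos_right (mul_lt_sixteen_pow (by omega))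
          (by positivity)
      _ = 2 ^ (12 * q) := by rw [← mul_pow, pow_mul]; norm_num
  have hδK : ((2 ^ q : ℝ)⁻¹ * ((2 ^ (7 * q) : ℕ) : ℝ)) ^ 2 = 2 ^ (12 * q) := by
    push_cast
    rw [show 7 * q = q + 6 * q by ring, pow_add, inv_mul_cancel_left₀ (by positivity), ← pow_mul]
    ring
  rw [hδK, exp_neg, ← div_eq_mul_inv, div_lt_one (exp_pos _)]
  calc (Fintype.card _ : ℝ) ≤ 2 ^ b := by exact_mod_cast card_index_le (by omega)
    _ ≤ exp 1 ^ b := pow_le_pow_left₀ zero_le_two (by linarith [add_one_le_exp 1]) b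
    _ = exp b := by rw [← exp_nat_mul, mul_one]
    _ < exp (2 ^ (12 * q) / 36) := by
        rw [exp_lt_exp, lt_div_iff₀ (by norm_num)]
        exact_mod_cast (by omega : b * 36 < 2 ^ (12 * q))

theorem stmt3 :
    ∃ γ c : ℝ, 0 < γ ∧ γ < 1 ∧ 0 < c ∧ ∃ N₀ : ℕ, ∀ n : ℕ, n ≥ N₀ →
      ∃ m : ℕ, (m : ℝ) ≥ c * n ∧
        ∃ nmExt : BS n → BS n → BS m,
          IsNM2Ext nmExt ((1 - γ) * n) ((2:ℝ) ^ (-(c * n / logb 2 n))) := by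
  refine ⟨1 / 8, 1 / 16, by norm_num, by norm_num, by norm_num, 48, fun n hn => ⟨n / 2, ?_, ?_⟩⟩
  · have : (n : ℝ) ≤ 16 * (n / 2 : ℕ) := by exact_mod_cast (by omega : n ≤ 16 * (n / 2))
    linarith
  have hn48 : (48 : ℝ) ≤ n := by exact_mod_cast hn
  set q := n / 8
  have hq : (n : ℝ) ≤ 8 * q + 7 := by exact_mod_cast (by omega : n ≤ 8 * q + 7)
  have hq' : (8 * q : ℝ) ≤ n := by exact_mod_cast (by omega : 8 * q ≤ n)
  obtain ⟨nmExt, hflat⟩ := exists_isFlatNM2Ext (α := BS n) (β := BS (n / 2)) (2 ^ (7 * q))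
    (δ := (2 ^ q : ℝ)⁻¹) (by positivity)
    ((inv_le_one_of_one_le₀ (one_le_pow₀ one_le_two)).trans (by norm_num))
    (card_index_mul_exp_lt hn)
  refine ⟨nmExt, (hflat.isNM2Ext ?_).mono ?_⟩
  · rw [one_div (((2 ^ (7 * q) : ℕ) : ℝ)), Nat.cast_pow, Nat.cast_ofNat, ← rpow_natCast,
      ← rpow_neg zero_le_two]
    exact rpow_le_rpow_of_exponent_le one_le_two (by push_cast; linarith)
  · have hlog : 1 ≤ logb 2 n := by
      rw [le_logb_iff_rpow_le one_lt_two (by positivity), rpow_one]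
      exact_mod_cast (by omega : 2 ≤ n)
    rw [← rpow_natCast, ← rpow_neg zero_le_two]
    refine rpow_le_rpow_of_exponent_le one_le_two (neg_le_neg ?_)
    calc 1 / 16 * (n : ℝ) / logb 2 n ≤ 1 / 16 * n := div_le_self (by positivity) hlog
      _ ≤ q := by linarith
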